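/- arXiv:2503.08265 — 3 statements merged into one kernel-verified Lean document; each statement's English description precedes it below -/
import Mathlib

section
/- Let (U,τ) be a topological structure for L with underlying set A. The Gelfand transform f ↦ f̂, where f̂(χ) = χ(f) for χ ∈ bU, is an isometric algebra isomorphism of AP(U) onto C(bU), the algebra of all continuous complex-valued functions on bU with the supremum norm; in particular ‖f̂‖_∞ = ‖f‖_∞ (the supremum over A) for every f ∈ AP(U), and every continuous complex-valued function on bU is the Gelfand transform of some almost periodic function. -/
open FirstOrder UniformFun
open scoped UniformConvergence Topology

/-- Fill the `j`-th coordinate with `a`, the others given by `x`. -/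
def Fill {A : Type*} {n : ℕ} (j : Fin n) (x : {i : Fin n // i ≠ j} → A) (a : A) : Fin n → A :=
  fun i => if h : i = j then a else x ⟨i, h⟩

/-- A simple translation of the structure. -/
def IsSimpleTranslation (L : FirstOrder.Language) (A : Type*) [L.Structure A] (t : A → A) : Prop :=
  ∃ (n : ℕ) (Φ : L.Functions n) (j : Fin n) (x : {i : Fin n // i ≠ j} → A),
    t = fun a => Language.Structure.funMap Φ (Fill j x a)

/-- The translation semigroup `S(U)`: finite compositions of simple translations. -/
inductive IsTranslation (L : FirstOrder.Language) (A : Type*) [L.Structure A] : (A → A) → Prop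
  | simple {t : A → A} : IsSimpleTranslation L A t → IsTranslation L A t
  | comp {s t : A → A} : IsTranslation L A s → IsTranslation L A t → IsTranslation L A (s ∘ t)

/-- A bounded continuous `f : A → ℂ` is almost periodic if for every `n`-ary function symbol `Φ`,
every translation `t ∈ S(U)` and every coordinate `j`, the family of functions
`x ↦ f (t (Φ (x₁, …, a, …, xₙ)))`, indexed by `a ∈ A`, is relatively compact in
`C_∞(A^{n-1})` (with the uniform convergence/supremum topology). -/
def IsAlmostPeriodic (L : FirstOrder.Language) (A : Type*) [TopologicalSpace A] [L.Structure A]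
    (f : A → ℂ) : Prop :=
  Continuous f ∧ (∃ C, ∀ a, ‖f a‖ ≤ C) ∧
    ∀ (n : ℕ) (Φ : L.Functions n) (t : A → A), IsTranslation L A t →
      ∀ j : Fin n,
        IsCompact (closure {u : ({i : Fin n // i ≠ j} → A) →ᵤ ℂ |
          ∃ a : A, u = UniformFun.ofFun fun x => f (t (Language.Structure.funMap Φ (Fill j x a)))})

/-- The almost periodic functions, as a subtype of `A →ᵤ ℂ` (so that the induced topology is
that of uniform convergence, i.e. the supremum norm topology). -/
abbrev APf (L : FirstOrder.Language) (A : Type*) [TopologicalSpace A] [L.Structure A] :=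
  {f : A →ᵤ ℂ // IsAlmostPeriodic L A (UniformFun.toFun f)}

/-- Characters: nonzero continuous multiplicative linear functionals on `AP(U)`. -/
def IsCharacter (L : FirstOrder.Language) (A : Type*) [TopologicalSpace A] [L.Structure A]
    (χ : APf L A → ℂ) : Prop :=
  Continuous χ ∧
  (∀ f g h : APf L A, UniformFun.toFun h.1 = UniformFun.toFun f.1 + UniformFun.toFun g.1 →
      χ h = χ f + χ g) ∧
  (∀ f g h : APf L A, UniformFun.toFun h.1 = UniformFun.toFun f.1 * UniformFun.toFun g.1 →
      χ h = χ f * χ g) ∧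
  (∀ (c : ℂ) (f g : APf L A), UniformFun.toFun g.1 = c • UniformFun.toFun f.1 →
      χ g = c * χ f) ∧
  (∃ f, χ f ≠ 0)

/-- The Gelfand space `bU` of `AP(U)`, with the topology of pointwise convergence
on `AP(U)`. -/
abbrev Bohr (L : FirstOrder.Language) (A : Type*) [TopologicalSpace A] [L.Structure A] :=
  {χ : APf L A → ℂ // IsCharacter L A χ}

lemma isAlmostPeriodic_const (L : FirstOrder.Language) (A : Type*) [TopologicalSpace A]
    [L.Structure A] (c : ℂ) : IsAlmostPeriodic L A fun _ => c := by
  refine ⟨continuous_const, ⟨‖c‖, fun _ => le_rfl⟩, ?_⟩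
  intro n Φ t _ j
  have hsub : {u : ({i : Fin n // i ≠ j} → A) →ᵤ ℂ |
      ∃ a : A, u = UniformFun.ofFun fun _ => c} ⊆ {UniformFun.ofFun fun _ => c} := by
    rintro u ⟨a, rfl⟩; rfl
  exact (isCompact_singleton.closure).of_isClosed_subset isClosed_closure
    (closure_mono hsub)

/-- The evaluation map `δ : A → bU`, `δ(a)(f) = f(a)`. -/
def bohrEval (L : FirstOrder.Language) (A : Type*) [TopologicalSpace A] [L.Structure A]
    [Nonempty A] (a : A) : Bohr L A :=
  ⟨fun f => UniformFun.toFun f.1 a, by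
    refine ⟨?_, ?_, ?_, ?_, ?_⟩
    · exact ((UniformFun.uniformContinuous_eval ℂ a).continuous).comp continuous_subtype_val
    · intro f g h hfg; exact congrFun hfg a
    · intro f g h hfg; exact congrFun hfg a
    · intro cc f g hfg; exact congrFun hfg a
    · exact ⟨⟨UniformFun.ofFun fun _ => 1, isAlmostPeriodic_const L A 1⟩, one_ne_zero⟩⟩

/-! Almost periodic functions form a closed, conjugation-stable subalgebra of the bounded
continuous functions on `A`. Since `C_∞` is complete, relative compactness of the families of
translates is total boundedness, which survives uniform limits and pointwise operations that are
uniformly continuous on the relevant ranges (for multiplication: on compact balls). So `AP(U)` is a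
commutative unital C⋆-algebra, the characters of `IsCharacter` are exactly the points of its
character space, and the theorem is the commutative Gelfand–Naimark theorem transported along
these identifications. -/

open Set Filter

section UniformSpace

variable {α β : Type*} [UniformSpace α] [UniformSpace β]

lemma isCompact_closure_iff_totallyBounded [CompleteSpace α] {s : Set α} :
    IsCompact (closure s) ↔ TotallyBounded s := by
  rw [isCompact_iff_totallyBounded_isComplete, totallyBounded_closure]
  exact and_iff_left isClosed_closure.isComplete

lemma TotallyBounded.prod {s : Set α} {t : Set β} (hs : TotallyBounded s)
    (ht : TotallyBounded t) : TotallyBounded (s ×ˢ t) := by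
  rw [totallyBounded_iff_ultrafilter] at hs ht ⊢
  intro f hf
  have hfst : Cauchy (map Prod.fst (f : Filter (α × β))) := hs (f.map Prod.fst)
    ((map_mono hf).trans (map_principal.trans_le (principal_mono.2 (fst_image_prod_subset s t))))
  have hsnd : Cauchy (map Prod.snd (f : Filter (α × β))) := ht (f.map Prod.snd)
    ((map_mono hf).trans (map_principal.trans_le (principal_mono.2 (snd_image_prod_subset s t))))
  exact (hfst.prod hsnd).mono le_prod_map_fst_snd

end UniformSpace

namespace UniformFun

variable {ι κ X Y Z : Type*} [UniformSpace Y]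

lemma isClosed_setOf_totallyBounded_range :
    IsClosed {φ : κ →ᵤ Y | TotallyBounded (range (toFun φ))} := by
  refine isClosed_of_closure_subset fun φ hφ d hd => ?_
  obtain ⟨V, hV, -, hVd⟩ := comp_symm_mem_uniformity_sets hd
  obtain ⟨ψ, hφψ, hψ⟩ := mem_closure_iff_nhds.mp hφ _
    ((UniformFun.hasBasis_nhds κ Y φ).mem_of_mem hV)
  obtain ⟨t, ht, hψt⟩ := hψ V hV
  refine ⟨t, ht, ?_⟩
  rintro _ ⟨k, rfl⟩
  obtain ⟨y, hy, hky⟩ := mem_iUnion₂.mp (hψt ⟨k, rfl⟩)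
  exact mem_iUnion₂.mpr ⟨y, hy, hVd (SetRel.prodMk_mem_comp (hφψ k) hky)⟩

lemma uniformContinuous_ofFun_comp (g : κ → ι → X) :
    UniformContinuous fun f : X →ᵤ Y => ofFun fun k => ofFun (toFun f ∘ g k) :=
  (UniformFun.hasBasis_uniformity X Y).uniformContinuous_iff
    (UniformFun.hasBasis_uniformity_of_basis κ (ι →ᵤ Y) (UniformFun.hasBasis_uniformity ι Y))
    |>.mpr fun V hV => ⟨V, hV, fun _ _ hfg _ _ => hfg _⟩

lemma isClosed_setOf_totallyBounded_range_comp (g : κ → ι → X) :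
    IsClosed {f : X →ᵤ Y | TotallyBounded (range fun k => ofFun (toFun f ∘ g k))} :=
  isClosed_setOf_totallyBounded_range.preimage (uniformContinuous_ofFun_comp g).continuous

variable [UniformSpace X] [UniformSpace Z]

lemma totallyBounded_range_map₂ {op : X → Y → Z} (hop : UniformContinuous₂ op)
    {F : κ → ι → X} {G : κ → ι → Y}
    (hF : TotallyBounded (range fun k => ofFun (F k)))
    (hG : TotallyBounded (range fun k => ofFun (G k))) :
    TotallyBounded (range fun k => ofFun fun x => op (F k x) (G k x)) := by
  have hmap : UniformContinuous fun p : (ι →ᵤ X) × (ι →ᵤ Y) =>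
      ofFun fun x => op (toFun p.1 x) (toFun p.2 x) :=
    (UniformFun.postcomp_uniformContinuous hop).comp
      UniformFun.uniformEquivProdArrow.symm.uniformContinuous
  refine ((hF.prod hG).image hmap).subset ?_
  rintro _ ⟨k, rfl⟩
  exact ⟨(ofFun (F k), ofFun (G k)), ⟨⟨k, rfl⟩, ⟨k, rfl⟩⟩, rfl⟩

lemma totallyBounded_range_codRestrict {s : Set X} {F : κ → ι → X} (hFs : ∀ k x, F k x ∈ s)
    (hF : TotallyBounded (range fun k => ofFun (F k))) :
    TotallyBounded (range fun k => ofFun fun x => (⟨F k x, hFs k x⟩ : s)) :=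
  (totallyBounded_preimage (UniformFun.postcomp_isUniformInducing
    isUniformEmbedding_subtype_val.isUniformInducing) hF).subset
    (by rintro _ ⟨k, rfl⟩; exact ⟨k, rfl⟩)

lemma totallyBounded_range_map₂_of_isCompact {op : X → Y → Z}
    (hop : Continuous (Function.uncurry op)) {s : Set X} {t : Set Y} (hs : IsCompact s)
    (ht : IsCompact t) {F : κ → ι → X} {G : κ → ι → Y} (hFs : ∀ k x, F k x ∈ s) (hGt : ∀ k x, G k x ∈ t)
    (hF : TotallyBounded (range fun k => ofFun (F k)))
    (hG : TotallyBounded (range fun k => ofFun (G k))) :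
    TotallyBounded (range fun k => ofFun fun x => op (F k x) (G k x)) := by
  have := isCompact_iff_compactSpace.mp hs
  have := isCompact_iff_compactSpace.mp ht
  have hop' : UniformContinuous₂ fun (a : s) (b : t) => op a b :=
    CompactSpace.uniformContinuous_of_continuous
      (hop.comp (continuous_subtype_val.prodMap continuous_subtype_val))
  exact totallyBounded_range_map₂ hop' (totallyBounded_range_codRestrict hFs hF)
    (totallyBounded_range_codRestrict hGt hG)

lemma totallyBounded_range_map {op : X → Y} (hop : UniformContinuous op) {F : κ → ι → X}
    (hF : TotallyBounded (range fun k => ofFun (F k))) :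
    TotallyBounded (range fun k => ofFun (op ∘ F k)) := by
  refine (hF.image (UniformFun.postcomp_uniformContinuous hop)).subset ?_
  rintro _ ⟨k, rfl⟩
  exact ⟨_, ⟨k, rfl⟩, rfl⟩

end UniformFun

open scoped BoundedContinuousFunction

section AlmostPeriodic

variable {L : FirstOrder.Language} {A : Type*} [TopologicalSpace A] [L.Structure A]

def translatedSlice {n : ℕ} (Φ : L.Functions n) (t : A → A) (j : Fin n) (a : A)
    (x : {i : Fin n // i ≠ j} → A) : A :=
  t (Language.Structure.funMap Φ (Fill j x a))

lemma isAlmostPeriodic_iff {f : A → ℂ} :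
    IsAlmostPeriodic L A f ↔ Continuous f ∧ (∃ C, ∀ a, ‖f a‖ ≤ C) ∧
      ∀ (n : ℕ) (Φ : L.Functions n) (t : A → A), IsTranslation L A t → ∀ j : Fin n,
        TotallyBounded (range fun a => ofFun (f ∘ translatedSlice Φ t j a)) := by
  have hrange : ∀ {n : ℕ} (Φ : L.Functions n) (t : A → A) (j : Fin n),
      {u : ({i : Fin n // i ≠ j} → A) →ᵤ ℂ |
        ∃ a : A, u = ofFun fun x => f (t (Language.Structure.funMap Φ (Fill j x a)))} =
      range fun a => ofFun (f ∘ translatedSlice Φ t j a) := by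
    intro n Φ t j; ext u; exact exists_congr fun a => eq_comm
  simp only [IsAlmostPeriodic, hrange, isCompact_closure_iff_totallyBounded]

lemma IsAlmostPeriodic.add {f g : A → ℂ} (hf : IsAlmostPeriodic L A f)
    (hg : IsAlmostPeriodic L A g) : IsAlmostPeriodic L A (f + g) := by
  obtain ⟨hfc, ⟨Cf, hCf⟩, hfK⟩ := isAlmostPeriodic_iff.1 hf
  obtain ⟨hgc, ⟨Cg, hCg⟩, hgK⟩ := isAlmostPeriodic_iff.1 hg
  exact isAlmostPeriodic_iff.2 ⟨hfc.add hgc,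
    ⟨Cf + Cg, fun a => (norm_add_le _ _).trans (add_le_add (hCf a) (hCg a))⟩,
    fun n Φ t ht j => totallyBounded_range_map₂ uniformContinuous_add (hfK n Φ t ht j)
      (hgK n Φ t ht j)⟩

lemma IsAlmostPeriodic.mul {f g : A → ℂ} (hf : IsAlmostPeriodic L A f)
    (hg : IsAlmostPeriodic L A g) : IsAlmostPeriodic L A (f * g) := by
  obtain ⟨hfc, ⟨Cf, hCf⟩, hfK⟩ := isAlmostPeriodic_iff.1 hf
  obtain ⟨hgc, ⟨Cg, hCg⟩, hgK⟩ := isAlmostPeriodic_iff.1 hg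
  exact isAlmostPeriodic_iff.2 ⟨hfc.mul hgc,
    ⟨Cf * Cg, fun a => (norm_mul_le _ _).trans (mul_le_mul (hCf a) (hCg a) (norm_nonneg _)
      ((norm_nonneg _).trans (hCf a)))⟩,
    fun n Φ t ht j => totallyBounded_range_map₂_of_isCompact continuous_mul
      (isCompact_closedBall 0 Cf) (isCompact_closedBall 0 Cg)
      (fun _ _ => mem_closedBall_zero_iff.2 (hCf _))
      (fun _ _ => mem_closedBall_zero_iff.2 (hCg _))
      (hfK n Φ t ht j) (hgK n Φ t ht j)⟩

lemma IsAlmostPeriodic.star {f : A → ℂ} (hf : IsAlmostPeriodic L A f) :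
    IsAlmostPeriodic L A (star f) := by
  obtain ⟨hfc, ⟨Cf, hCf⟩, hfK⟩ := isAlmostPeriodic_iff.1 hf
  exact isAlmostPeriodic_iff.2 ⟨hfc.star, ⟨Cf, fun a => (norm_star (f a)).trans_le (hCf a)⟩,
    fun n Φ t ht j => totallyBounded_range_map Complex.isometry_conj.uniformContinuous
      (hfK n Φ t ht j)⟩

lemma isClosed_setOf_isAlmostPeriodic :
    IsClosed {F : A →ᵇ ℂ | IsAlmostPeriodic L A F} := by
  refine isClosed_of_closure_subset fun F hF => isAlmostPeriodic_iff.2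
    ⟨F.continuous, ⟨‖F‖, F.norm_coe_le_norm⟩, fun n Φ t ht j => ?_⟩
  have hclosed : IsClosed {G : A →ᵇ ℂ |
      TotallyBounded (range fun a => ofFun (G ∘ translatedSlice Φ t j a))} :=
    (isClosed_setOf_totallyBounded_range_comp _).preimage
      BoundedContinuousFunction.isInducing_coeFn.continuous
  exact closure_minimal (fun G hG => (isAlmostPeriodic_iff.1 hG).2.2 n Φ t ht j) hclosed hF

end AlmostPeriodic

def almostPeriodicSubalgebra (L : FirstOrder.Language) (A : Type*) [TopologicalSpace A]
    [L.Structure A] : StarSubalgebra ℂ (A →ᵇ ℂ) where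
  carrier := {F | IsAlmostPeriodic L A F}
  mul_mem' hf hg := hf.mul hg
  add_mem' hf hg := hf.add hg
  algebraMap_mem' c := isAlmostPeriodic_const L A c
  star_mem' hf := hf.star

section Gelfand

variable (L : FirstOrder.Language) (A : Type*) [TopologicalSpace A] [L.Structure A]

instance : IsClosed (almostPeriodicSubalgebra L A : Set (A →ᵇ ℂ)) :=
  isClosed_setOf_isAlmostPeriodic

noncomputable def apfHomeomorph : APf L A ≃ₜ almostPeriodicSubalgebra L A where
  toFun f := ⟨.ofNormedAddCommGroup (toFun f.1) f.2.1 _ f.2.2.1.choose_spec, f.2⟩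
  invFun F := ⟨ofFun F, F.2⟩
  left_inv _ := rfl
  right_inv _ := rfl
  continuous_toFun := Continuous.subtype_mk
    (BoundedContinuousFunction.isInducing_coeFn.continuous_iff.2 continuous_subtype_val) _
  continuous_invFun := Continuous.subtype_mk
    (BoundedContinuousFunction.isInducing_coeFn.continuous.comp continuous_subtype_val) _

variable {L A} in
lemma apfHomeomorph_eq_of_toFun_eq {f : APf L A} {F : almostPeriodicSubalgebra L A}
    (h : toFun f.1 = F) : apfHomeomorph L A f = F :=
  Subtype.ext (BoundedContinuousFunction.ext (congrFun h))

noncomputable def bohrHomeomorph :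
    Bohr L A ≃ₜ WeakDual.characterSpace ℂ (almostPeriodicSubalgebra L A) where
  toFun χ := ⟨{ toFun F := χ.1 ((apfHomeomorph L A).symm F)
                map_add' F G := χ.2.2.1 _ _ _ rfl
                map_smul' c F := χ.2.2.2.2.1 c _ _ rfl
                cont := χ.2.1.comp (apfHomeomorph L A).symm.continuous },
    fun h0 => by
      obtain ⟨f, hf⟩ := χ.2.2.2.2.2
      exact hf (congrArg (fun ψ : WeakDual ℂ _ => ψ (apfHomeomorph L A f)) h0),
    fun F G => χ.2.2.2.1 _ _ _ rfl⟩
  invFun ψ := ⟨fun f => ψ (apfHomeomorph L A f),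
    (map_continuous ψ).comp (apfHomeomorph L A).continuous,
    fun f g h hfgh => (congrArg ψ (apfHomeomorph_eq_of_toFun_eq hfgh)).trans (map_add ψ _ _),
    fun f g h hfgh => (congrArg ψ (apfHomeomorph_eq_of_toFun_eq hfgh)).trans (map_mul ψ _ _),
    fun c f g hfg => (congrArg ψ (apfHomeomorph_eq_of_toFun_eq hfg)).trans (map_smul ψ c _),
    ⟨(apfHomeomorph L A).symm 1, by simp⟩⟩
  left_inv _ := rfl
  right_inv _ := rfl
  continuous_toFun := Continuous.subtype_mk (WeakDual.continuous_of_continuous_eval fun F =>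
    (continuous_apply _).comp continuous_subtype_val) _
  continuous_invFun := Continuous.subtype_mk (continuous_pi fun f =>
    (WeakDual.eval_continuous _).comp continuous_subtype_val) _

lemma Bohr.injective_eval :
    Function.Injective fun (f : APf L A) (χ : Bohr L A) => χ.1 f := by
  refine fun f g hfg => (apfHomeomorph L A).injective
    ((gelfandStarTransform _).injective (ContinuousMap.ext fun ψ => ?_))
  obtain ⟨χ, rfl⟩ := (bohrHomeomorph L A).surjective ψ
  exact congrFun hfg χ

variable {L A}

lemma gelfandStarTransform_apfHomeomorph_apply (f : APf L A) (χ : Bohr L A) :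
    gelfandStarTransform _ (apfHomeomorph L A f) (bohrHomeomorph L A χ) = χ.1 f :=
  rfl

lemma Bohr.iSup_norm_apply_eq_iSup_norm (f : APf L A) :
    (⨆ χ : Bohr L A, ‖χ.1 f‖) = ⨆ a, ‖toFun f.1 a‖ := by
  simp only [← gelfandStarTransform_apfHomeomorph_apply]
  rw [(bohrHomeomorph L A).surjective.iSup_comp
      fun ψ => ‖gelfandStarTransform _ (apfHomeomorph L A f) ψ‖,
    ← ContinuousMap.norm_eq_iSup_norm]
  calc ‖gelfandStarTransform (almostPeriodicSubalgebra L A) (apfHomeomorph L A f)‖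
      = ‖apfHomeomorph L A f‖ :=
        StarAlgEquiv.norm_map (gelfandStarTransform (almostPeriodicSubalgebra L A)) _
    _ = ⨆ a, ‖toFun f.1 a‖ :=
      BoundedContinuousFunction.norm_eq_iSup_norm (apfHomeomorph L A f : A →ᵇ ℂ)

lemma Bohr.exists_eval_eq {g : Bohr L A → ℂ} (hg : Continuous g) :
    ∃ f : APf L A, ∀ χ : Bohr L A, χ.1 f = g χ := by
  obtain ⟨F, hF⟩ := (gelfandStarTransform (almostPeriodicSubalgebra L A)).surjective
    ⟨g ∘ (bohrHomeomorph L A).symm, hg.comp (bohrHomeomorph L A).symm.continuous⟩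
  refine ⟨(apfHomeomorph L A).symm F, fun χ => ?_⟩
  calc χ.1 ((apfHomeomorph L A).symm F)
      = gelfandStarTransform _ F (bohrHomeomorph L A χ) := rfl
    _ = g ((bohrHomeomorph L A).symm (bohrHomeomorph L A χ)) := DFunLike.congr_fun hF _
    _ = g χ := congrArg g ((bohrHomeomorph L A).symm_apply_apply χ)

end Gelfand

theorem gelfandTransform_isometric_iso_general (L : FirstOrder.Language) (A : Type*)
    [TopologicalSpace A] [L.Structure A] :
    (∀ f : APf L A, Continuous fun χ : Bohr L A => χ.1 f) ∧
    (∀ f g h : APf L A, UniformFun.toFun h.1 = UniformFun.toFun f.1 + UniformFun.toFun g.1 →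
      ∀ χ : Bohr L A, χ.1 h = χ.1 f + χ.1 g) ∧
    (∀ f g h : APf L A, UniformFun.toFun h.1 = UniformFun.toFun f.1 * UniformFun.toFun g.1 →
      ∀ χ : Bohr L A, χ.1 h = χ.1 f * χ.1 g) ∧
    (∀ (c : ℂ) (f g : APf L A), UniformFun.toFun g.1 = c • UniformFun.toFun f.1 →
      ∀ χ : Bohr L A, χ.1 g = c * χ.1 f) ∧
    (∀ f : APf L A, (⨆ a : A, ‖UniformFun.toFun f.1 a‖) = ⨆ χ : Bohr L A, ‖χ.1 f‖) ∧
    Function.Injective (fun (f : APf L A) => fun χ : Bohr L A => χ.1 f) ∧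
    (∀ g : Bohr L A → ℂ, Continuous g → ∃ f : APf L A, ∀ χ : Bohr L A, χ.1 f = g χ) :=
  ⟨fun f => (continuous_apply f).comp continuous_subtype_val,
    fun f g h hfgh χ => χ.2.2.1 f g h hfgh, fun f g h hfgh χ => χ.2.2.2.1 f g h hfgh,
    fun c f g hfg χ => χ.2.2.2.2.1 c f g hfg, fun f => (Bohr.iSup_norm_apply_eq_iSup_norm f).symm,
    Bohr.injective_eval L A, fun _ => Bohr.exists_eval_eq⟩

/-- The Gelfand transform `f ↦ f̂`, `f̂(χ) = χ(f)`, is an isometric algebra isomorphism of `AP(U)`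
onto `C(bU)`: each `f̂` is continuous on `bU`, the transform is additive, multiplicative and
`ℂ`-homogeneous, norm-preserving (`‖f̂‖_∞ = ‖f‖_∞`), injective, and every continuous complex
function on `bU` is the Gelfand transform of some almost periodic function. -/
theorem gelfandTransform_isometric_iso (L : FirstOrder.Language) (A : Type*)
    [TopologicalSpace A] [L.Structure A] [Nonempty A]
    (hA : ∀ (n : ℕ) (Φ : L.Functions n),
      Continuous fun x : Fin n → A => Language.Structure.funMap Φ x) :
    (∀ f : APf L A, Continuous fun χ : Bohr L A => χ.1 f) ∧
    (∀ f g h : APf L A, UniformFun.toFun h.1 = UniformFun.toFun f.1 + UniformFun.toFun g.1 →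
      ∀ χ : Bohr L A, χ.1 h = χ.1 f + χ.1 g) ∧
    (∀ f g h : APf L A, UniformFun.toFun h.1 = UniformFun.toFun f.1 * UniformFun.toFun g.1 →
      ∀ χ : Bohr L A, χ.1 h = χ.1 f * χ.1 g) ∧
    (∀ (c : ℂ) (f g : APf L A), UniformFun.toFun g.1 = c • UniformFun.toFun f.1 →
      ∀ χ : Bohr L A, χ.1 g = c * χ.1 f) ∧
    (∀ f : APf L A, (⨆ a : A, ‖UniformFun.toFun f.1 a‖) = ⨆ χ : Bohr L A, ‖χ.1 f‖) ∧
    Function.Injective (fun (f : APf L A) => fun χ : Bohr L A => χ.1 f) ∧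
    (∀ g : Bohr L A → ℂ, Continuous g → ∃ f : APf L A, ∀ χ : Bohr L A, χ.1 f = g χ) :=
  gelfandTransform_isometric_iso_general L A
end

section
/- Let (U,τ) be a topological structure for L with underlying set A, and let δ : A → bU be the evaluation map. For every n-ary function symbol Φ of L and all tuples (a_1,…,a_n), (b_1,…,b_n) ∈ A^n with δ(a_i) = δ(b_i) for 1 ≤ i ≤ n, it holds that δ(Φ_U(a_1,…,a_n)) = δ(Φ_U(b_1,…,b_n)). Consequently, setting Φ(δ(a_1),…,δ(a_n)) = δ(Φ_U(a_1,…,a_n)) yields a well-defined L-structure on δ(A) making δ a continuous homomorphism. -/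
open FirstOrder UniformFun
open scoped UniformConvergence Topology

lemma continuous_fill {A : Type*} [TopologicalSpace A] {n : ℕ} (j : Fin n)
    (x : {i : Fin n // i ≠ j} → A) : Continuous (Fill j x) := by
  apply continuous_pi
  intro i
  by_cases h : i = j
  · simp only [Fill, dif_pos h]; exact continuous_id
  · simp only [Fill, dif_neg h]; exact continuous_const

lemma isAlmostPeriodic_comp (L : FirstOrder.Language) (A : Type*) [TopologicalSpace A]
    [L.Structure A] {f : A → ℂ} (hf : IsAlmostPeriodic L A f) {t : A → A}
    (ht : IsTranslation L A t) (htc : Continuous t) : IsAlmostPeriodic L A (f ∘ t) := by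
  obtain ⟨hc, ⟨C, hC⟩, hK⟩ := hf
  refine ⟨hc.comp htc, ⟨C, fun a => hC (t a)⟩, ?_⟩
  intro n Φ s hs j
  exact hK n Φ (t ∘ s) (IsTranslation.comp ht hs) j

/-- **Lemma 2.2.** If `δ(aᵢ) = δ(bᵢ)` for all `i`, then `δ(Φ(a₁,…,aₙ)) = δ(Φ(b₁,…,bₙ))`; hence
`Φ(δ(a₁),…,δ(aₙ)) := δ(Φ(a₁,…,aₙ))` yields a well-defined `L`-structure on `δ(A)` making the
(continuous) map `δ` a homomorphism. -/
theorem bohrEval_funMap_well_defined (L : FirstOrder.Language) (A : Type*)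
    [TopologicalSpace A] [L.Structure A] [Nonempty A]
    (hA : ∀ (n : ℕ) (Φ : L.Functions n),
      Continuous fun x : Fin n → A => Language.Structure.funMap Φ x) :
    (∀ (n : ℕ) (Φ : L.Functions n) (a b : Fin n → A),
      (∀ i, bohrEval L A (a i) = bohrEval L A (b i)) →
      bohrEval L A (Language.Structure.funMap Φ a) = bohrEval L A (Language.Structure.funMap Φ b)) ∧
    Continuous (bohrEval L A) := by
  have hcont : Continuous (bohrEval L A) := by
    apply Continuous.subtype_mk
    exact continuous_pi fun F => F.2.1
  refine ⟨?_, hcont⟩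
  intro n Φ a b hab
  apply Subtype.ext
  funext F
  have hf : IsAlmostPeriodic L A (UniformFun.toFun F.1) := F.2
  have key : ∀ k : ℕ, k ≤ n →
      UniformFun.toFun F.1 (Language.Structure.funMap Φ a) =
      UniformFun.toFun F.1 (Language.Structure.funMap Φ
        (fun i : Fin n => if i.val < k then b i else a i)) := by
    intro k hk
    induction k with
    | zero => simp
    | succ k ih =>
      have hk' : k < n := hk
      rw [ih (le_of_lt hk')]
      have jk : Fin n := ⟨k, hk'⟩
      let j : Fin n := ⟨k, hk'⟩
      let x : {i : Fin n // i ≠ j} → A := fun i => if i.1.val < k then b i.1 else a i.1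
      let t : A → A := fun z => Language.Structure.funMap Φ (Fill j x z)
      have ht : IsTranslation L A t := .simple ⟨n, Φ, j, x, rfl⟩
      have htc : Continuous t := (hA n Φ).comp (continuous_fill j x)
      have hg : IsAlmostPeriodic L A
          (UniformFun.toFun (UniformFun.ofFun (UniformFun.toFun F.1 ∘ t))) :=
        isAlmostPeriodic_comp L A hf ht htc
      have heval := congrFun (Subtype.ext_iff.mp (hab j))
        ⟨UniformFun.ofFun (UniformFun.toFun F.1 ∘ t), hg⟩
      have h1 : Fill j x (a j) = fun i : Fin n => if i.val < k then b i else a i := by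
        funext i
        by_cases h : i = j
        · subst h; simp [Fill, j]
        · have hik : i.val ≠ k := fun hh => h (Fin.ext hh)
          simp [Fill, h, x]
      have h2 : Fill j x (b j) = fun i : Fin n => if i.val < k + 1 then b i else a i := by
        funext i
        by_cases h : i = j
        · subst h; simp [Fill, j]
        · have hik : i.val ≠ k := fun hh => h (Fin.ext hh)
          have : i.val < k + 1 ↔ i.val < k := by omega
          simp [Fill, h, x, this]
      rw [← h1, ← h2]
      exact heval
  have hb : (fun i : Fin n => if i.val < n then b i else a i) = b := by
    funext i; simp [i.isLt]
  have := key n le_rfl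
  rw [hb] at this
  exact this
end

section
/- Let (U,τ) be a topological structure for L with underlying set A and let δ : A → bU be the evaluation map. Let K be a compact Hausdorff space carrying an L-structure whose function-symbol interpretations are continuous, and let ρ : A → K be a continuous map with dense image which is a homomorphism: ρ(Φ_U(a_1,…,a_n)) = Φ_K(ρ(a_1),…,ρ(a_n)) for every n-ary function symbol Φ of L and all a_i ∈ A, and ρ(c_U) = c_K for every constant symbol c. Then there exists a continuous map Γ : bU → K with Γ∘δ = ρ. In particular, bU is the maximal compatible compactification of U. -/
open FirstOrder UniformFun
open scoped UniformConvergence Topology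

/-!
Every `g ∈ C(K)` pulls back to an almost periodic function `g ∘ ρ`: a translation of `A` is
a composite of maps `a ↦ Φ(x₁, …, a, …, xₙ)`, each of which `ρ` carries to a continuous
self-map of `K`, so every family in the definition of almost periodicity is contained in the
continuous image of the compact space `K` in `C_∞(A^{n-1})`. Thus `g ↦ g ∘ ρ` is a continuous
unital algebra map `C(K) → AP(U)`; precomposing with it sends each character of `AP(U)`
continuously to a character of `C(K)`, i.e. (Gelfand duality) to a point of `K`.
-/

open Language.Structure

lemma comp_fill {A K : Type*} {n : ℕ} (j : Fin n) (ρ : A → K)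
    (x : {i : Fin n // i ≠ j} → A) (a : A) :
    ρ ∘ Fill j x a = Fill j (ρ ∘ x) (ρ a) := by
  funext i
  by_cases h : i = j <;> simp [Fill, h]

lemma continuous_fill_s11 {K : Type*} [TopologicalSpace K] {n : ℕ} (j : Fin n) :
    Continuous fun p : ({i : Fin n // i ≠ j} → K) × K => Fill j p.1 p.2 := by
  refine continuous_pi fun i => ?_
  by_cases h : i = j
  · simpa only [Fill, dif_pos h] using continuous_snd
  · simp only [Fill, dif_neg h]
    exact (continuous_apply _).comp continuous_fst

lemma continuous_ofFun_comp_curry {K Y X β : Type*} [TopologicalSpace K] [TopologicalSpace Y]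
    [CompactSpace Y] [UniformSpace β] (F : C(K × Y, β)) (h : X → Y) :
    Continuous fun k => ofFun fun x => F (k, h x) :=
  (UniformFun.precomp_uniformContinuous (f := h)).continuous.comp <|
    ContinuousMap.isUniformEmbedding_uniformFunOfFun.uniformContinuous.continuous.comp
      F.curry.continuous

lemma IsCharacter.apply_eq_one {L : FirstOrder.Language} {A : Type*} [TopologicalSpace A]
    [L.Structure A] {χ : APf L A → ℂ} (hχ : IsCharacter L A χ) {e : APf L A}
    (he : toFun e.1 = 1) : χ e = 1 := by
  obtain ⟨-, -, hmul, -, f, hf⟩ := hχ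
  have hfe : χ f * χ e = χ f := (hmul f e f (by rw [he, mul_one])).symm
  exact (mul_eq_left₀ hf).mp hfe

section Pullback

variable {L : FirstOrder.Language} {A K : Type*} [L.Structure A] [TopologicalSpace K]
  [L.Structure K]

lemma IsTranslation.exists_continuous_semiconj
    (hK : ∀ (n : ℕ) (Φ : L.Functions n), Continuous fun x : Fin n → K => funMap Φ x)
    {ρ : A → K} (hρhom : ∀ (n : ℕ) (Φ : L.Functions n) (a : Fin n → A),
      ρ (funMap Φ a) = funMap Φ (ρ ∘ a))
    {t : A → A} (ht : IsTranslation L A t) :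
    ∃ t' : K → K, Continuous t' ∧ Function.Semiconj ρ t t' := by
  induction ht with
  | simple h =>
    obtain ⟨n, Φ, j, x, rfl⟩ := h
    refine ⟨fun k => funMap Φ (Fill j (ρ ∘ x) k),
      (hK n Φ).comp ((continuous_fill_s11 j).comp (Continuous.prodMk_right (ρ ∘ x))), fun a => ?_⟩
    simp only [hρhom, comp_fill]
  | comp _ _ ihs iht =>
    obtain ⟨s', hs'_cont, hs'⟩ := ihs
    obtain ⟨t', ht'_cont, ht'⟩ := iht
    exact ⟨s' ∘ t', hs'_cont.comp ht'_cont, hs'.comp_right ht'⟩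

variable [TopologicalSpace A] [CompactSpace K]

lemma isAlmostPeriodic_comp_s11
    (hK : ∀ (n : ℕ) (Φ : L.Functions n), Continuous fun x : Fin n → K => funMap Φ x)
    {ρ : A → K} (hρc : Continuous ρ) (hρhom : ∀ (n : ℕ) (Φ : L.Functions n) (a : Fin n → A),
      ρ (funMap Φ a) = funMap Φ (ρ ∘ a))
    (g : C(K, ℂ)) : IsAlmostPeriodic L A (g ∘ ρ) := by
  refine ⟨g.continuous.comp hρc, ⟨‖g‖, fun a => g.norm_coe_le_norm (ρ a)⟩, ?_⟩
  intro n Φ t ht j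
  obtain ⟨t', ht'_cont, ht'⟩ := ht.exists_continuous_semiconj hK hρhom
  let F : C(K × ({i : Fin n // i ≠ j} → K), ℂ) :=
    ⟨fun p => g (t' (funMap Φ (Fill j p.2 p.1))),
      g.continuous.comp <| ht'_cont.comp <| (hK n Φ).comp <|
        (continuous_fill_s11 j).comp continuous_swap⟩
  refine (isCompact_range (continuous_ofFun_comp_curry F (ρ ∘ ·))).closure_of_subset ?_
  rintro _ ⟨a, rfl⟩
  refine ⟨ρ a, congrArg ofFun (funext fun x => ?_)⟩
  simp only [F, ContinuousMap.coe_mk, Function.comp_apply, ht' _, hρhom, comp_fill]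

variable (hK : ∀ (n : ℕ) (Φ : L.Functions n), Continuous fun x : Fin n → K => funMap Φ x)
  {ρ : A → K} (hρc : Continuous ρ) (hρhom : ∀ (n : ℕ) (Φ : L.Functions n) (a : Fin n → A),
    ρ (funMap Φ a) = funMap Φ (ρ ∘ a))

noncomputable def APf.pullback (g : C(K, ℂ)) : APf L A :=
  ⟨ofFun (g ∘ ρ), isAlmostPeriodic_comp_s11 hK hρc hρhom g⟩

lemma APf.continuous_pullback : Continuous (APf.pullback hK hρc hρhom) :=
  ((UniformFun.precomp_uniformContinuous (f := ρ)).continuous.comp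
    ContinuousMap.isUniformEmbedding_uniformFunOfFun.uniformContinuous.continuous).subtype_mk _

noncomputable def Bohr.toCharacterSpace (χ : Bohr L A) : WeakDual.characterSpace ℂ C(K, ℂ) :=
  let ι := APf.pullback hK hρc hρhom
  ⟨{ toFun := fun g => χ.1 (ι g)
     map_add' := fun _ _ => by
       obtain ⟨-, hadd, -⟩ := χ.2
       exact hadd _ _ _ rfl
     map_smul' := fun c _ => by
       obtain ⟨-, -, -, hsmul, -⟩ := χ.2
       exact hsmul c _ _ rfl
     cont := χ.2.1.comp (APf.continuous_pullback hK hρc hρhom) },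
    fun h0 => by
      have h1 : χ.1 (ι 1) = 1 := χ.2.apply_eq_one rfl
      exact one_ne_zero (h1.symm.trans (congrArg (fun φ : WeakDual ℂ C(K, ℂ) => φ 1) h0)),
    fun _ _ => by
      obtain ⟨-, -, hmul, -⟩ := χ.2
      exact hmul _ _ _ rfl⟩

lemma Bohr.continuous_toCharacterSpace : Continuous (Bohr.toCharacterSpace hK hρc hρhom) :=
  (WeakDual.continuous_of_continuous_eval fun g =>
    (continuous_apply (APf.pullback hK hρc hρhom g)).comp continuous_subtype_val).subtype_mk _

lemma Bohr.toCharacterSpace_bohrEval [T2Space K] [Nonempty A] (a : A) :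
    Bohr.toCharacterSpace hK hρc hρhom (bohrEval L A a) =
      WeakDual.CharacterSpace.homeoEval K ℂ (ρ a) :=
  Subtype.ext (ContinuousLinearMap.ext fun _ => rfl)

end Pullback

/-- Constant symbols are the `0`-ary function symbols, so `ρ(c_U) = c_K` is the case `n = 0`
of `hρhom`. -/
theorem bohr_maximal_general (L : FirstOrder.Language) (A : Type*)
    [TopologicalSpace A] [L.Structure A] [Nonempty A]
    (K : Type*) [TopologicalSpace K] [CompactSpace K] [T2Space K] [L.Structure K]
    (hK : ∀ (n : ℕ) (Φ : L.Functions n),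
      Continuous fun x : Fin n → K => Language.Structure.funMap Φ x)
    (ρ : A → K) (hρc : Continuous ρ)
    (hρhom : ∀ (n : ℕ) (Φ : L.Functions n) (a : Fin n → A),
      ρ (Language.Structure.funMap Φ a) = Language.Structure.funMap Φ (ρ ∘ a)) :
    ∃ Γ : Bohr L A → K, Continuous Γ ∧ Γ ∘ bohrEval L A = ρ := by
  refine ⟨(WeakDual.CharacterSpace.homeoEval K ℂ).symm ∘ Bohr.toCharacterSpace hK hρc hρhom,
    (Homeomorph.continuous _).comp (Bohr.continuous_toCharacterSpace hK hρc hρhom),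
    funext fun a => ?_⟩
  simp [Bohr.toCharacterSpace_bohrEval]

/-- **Proposition 2.5.** For any compact Hausdorff space `K` carrying an `L`-structure with
continuous function-symbol interpretations, and any continuous homomorphism `ρ : A → K` with dense
image, there is a continuous `Γ : bU → K` with `Γ ∘ δ = ρ`. Hence `bU` is the maximal compatible
compactification of `U`. (In Mathlib, constant symbols are the `0`-ary function symbols, so the
condition `ρ(c_U) = c_K` is the case `n = 0` of the homomorphism condition.) -/
theorem bohr_maximal (L : FirstOrder.Language) (A : Type*)
    [TopologicalSpace A] [L.Structure A] [Nonempty A]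
    (hA : ∀ (n : ℕ) (Φ : L.Functions n),
      Continuous fun x : Fin n → A => Language.Structure.funMap Φ x)
    (K : Type*) [TopologicalSpace K] [CompactSpace K] [T2Space K] [L.Structure K]
    (hK : ∀ (n : ℕ) (Φ : L.Functions n),
      Continuous fun x : Fin n → K => Language.Structure.funMap Φ x)
    (ρ : A → K) (hρc : Continuous ρ) (hρd : DenseRange ρ)
    (hρhom : ∀ (n : ℕ) (Φ : L.Functions n) (a : Fin n → A),
      ρ (Language.Structure.funMap Φ a) = Language.Structure.funMap Φ (ρ ∘ a)) :
    ∃ Γ : Bohr L A → K, Continuous Γ ∧ Γ ∘ bohrEval L A = ρ :=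
  bohr_maximal_general L A K hK ρ hρc hρhom
end
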